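/- Let p, n ≥ 1 and let W ⊆ ℂⁿ be an open set such that every a = (a_1, …, a_n) ∈ W has pairwise distinct, nonzero coordinates. Let B_1, …, B_n be holomorphic maps from W to the p×p complex matrices, set B_0 = −Σ_{j=1}^{n} B_j and C_1 = B_0 and a_0 = 0. For a ∈ W and z ∈ ℂ \ {0, a_1, …, a_n} set A(a, z) = Σ_{j=0}^{n} B_j(a) · (z − a_j)^{-1} and A_i(a, z) = −B_i(a) · (z − a_i)^{-1} for i = 1, …, n. Then the zero-curvature conditions (F1) ∂A_i/∂z − ∂A/∂a_i = A·A_i − A_i·A for every i = 1, …, n and (F2) ∂A_j/∂a_i − ∂A_i/∂a_j = A_i·A_j − A_j·A_i for all i ≠ j in {1, …, n}, holding for all a ∈ W and all z ∈ ℂ \ {0, a_1, …, a_n}, are equivalent to the ordinary Schlesinger system for B_0, B_1, …, B_n: for every i ∈ {0, 1, …, n} and m ∈ {1, …, n} with m ≠ i, ∂B_i/∂a_m = [B_i, B_m]/(a_i − a_m) (with a_0 = 0), and for every i ∈ {1, …, n}, ∂B_i/∂a_i = −Σ_{j ∈ {0,…,n}, j ≠ i} [B_i, B_j]/(a_i −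 a_j). -/

import Mathlib

open scoped BigOperators

/-- Entrywise partial derivative in the direction of the `i`-th coordinate
of a matrix-valued map on `ℂⁿ`. -/
noncomputable def pd {n p : ℕ} (i : Fin n)
    (f : (Fin n → ℂ) → Matrix (Fin p) (Fin p) ℂ) (a : Fin n → ℂ) :
    Matrix (Fin p) (Fin p) ℂ :=
  Matrix.of fun r c => fderiv ℂ (fun x => f x r c) a (Pi.single i 1)

/-- Entrywise derivative of a matrix-valued map of one complex variable. -/
noncomputable def zd {p : ℕ}
    (f : ℂ → Matrix (Fin p) (Fin p) ℂ) (z : ℂ) :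
    Matrix (Fin p) (Fin p) ℂ :=
  Matrix.of fun r c => deriv (fun w => f w r c) z

/-- The commutator of two matrices. -/
noncomputable def matComm {p : ℕ} (X Y : Matrix (Fin p) (Fin p) ℂ) : Matrix (Fin p) (Fin p) ℂ :=
  X * Y - Y * X

/-!
Write `A = ∑_{k=0}^n (z - a_k)⁻¹ B_k`. In (F1) for the direction `a_m` the double poles
`(z - a_m)⁻² B_m` of `∂A_m/∂z` and `∂A/∂a_m` cancel, leaving
`∑_k (z - a_k)⁻¹ ∂B_k/∂a_m = (z - a_m)⁻¹ ∑_k (z - a_k)⁻¹ [B_k, B_m]`.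
Expanding the right side in partial fractions with
`(z - a_m)⁻¹ (z - a_k)⁻¹ = (a_k - a_m)⁻¹ ((z - a_k)⁻¹ - (z - a_m)⁻¹)` and comparing the
coefficients of `(z - a_k)⁻¹`, which are unique (multiply by `z - a_k` and let `z → a_k`),
turns (F1) into the Schlesinger system and back. The same identity for `k = j`, `m = i` shows
that the off-diagonal Schlesinger equations imply (F2).
-/

open Filter Topology Finset

section PartialFractions

variable {𝕜 E ι : Type*} [Fintype ι] [DecidableEq ι]

theorem inv_sub_mul_inv_sub [Field 𝕜] {u v z : 𝕜} (huv : u ≠ v) (hu : z ≠ u) (hv : z ≠ v) :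
    (z - u)⁻¹ * (z - v)⁻¹ = (u - v)⁻¹ * ((z - u)⁻¹ - (z - v)⁻¹) := by
  field_simp [sub_ne_zero.2 huv, sub_ne_zero.2 hu, sub_ne_zero.2 hv]
  ring

theorem inv_sub_smul_sum_inv_sub_smul [Field 𝕜] [AddCommGroup E] [Module 𝕜 E] {w : ι → 𝕜}
    (hw : Function.Injective w) {z : 𝕜} (hz : ∀ k, z ≠ w k) (m : ι) {C : ι → E}
    (hCm : C m = 0) :
    (z - w m)⁻¹ • ∑ k, (z - w k)⁻¹ • C k
      = ∑ k, (z - w k)⁻¹ • if k = m then -∑ l ∈ univ.erase m, (w l - w m)⁻¹ • C l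
          else (w k - w m)⁻¹ • C k := by
  have hsplit : ∀ k ∈ univ.erase m, ((z - w m)⁻¹ * (z - w k)⁻¹) • C k
      = ((z - w k)⁻¹ * (w k - w m)⁻¹) • C k - ((z - w m)⁻¹ * (w k - w m)⁻¹) • C k := by
    intro k hk
    rw [← sub_smul, mul_comm, inv_sub_mul_inv_sub (hw.ne (ne_of_mem_erase hk)) (hz k) (hz m)]
    ring_nf
  calc (z - w m)⁻¹ • ∑ k, (z - w k)⁻¹ • C k
      = ∑ k ∈ univ.erase m, ((z - w m)⁻¹ * (z - w k)⁻¹) • C k := by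
        rw [smul_sum, ← add_sum_erase _ _ (mem_univ m), hCm, smul_zero, smul_zero, zero_add]
        simp_rw [smul_smul]
    _ = ∑ k ∈ univ.erase m, ((z - w k)⁻¹ * (w k - w m)⁻¹) • C k
          - (z - w m)⁻¹ • ∑ k ∈ univ.erase m, (w k - w m)⁻¹ • C k := by
        rw [sum_congr rfl hsplit, sum_sub_distrib, smul_sum]
        simp_rw [smul_smul]
    _ = _ := by
        have hoff : ∑ k ∈ univ.erase m, (z - w k)⁻¹ • (if k = m then
              -∑ l ∈ univ.erase m, (w l - w m)⁻¹ • C l else (w k - w m)⁻¹ • C k)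
            = ∑ k ∈ univ.erase m, ((z - w k)⁻¹ * (w k - w m)⁻¹) • C k :=
          sum_congr rfl fun k hk => by rw [if_neg (ne_of_mem_erase hk), smul_smul]
        rw [← add_sum_erase _ _ (mem_univ m), hoff, if_pos rfl, smul_neg]
        abel

theorem eq_zero_of_forall_sum_inv_sub_smul_eq_zero [NontriviallyNormedField 𝕜] [AddCommGroup E]
    [Module 𝕜 E] [TopologicalSpace E] [IsTopologicalAddGroup E] [ContinuousSMul 𝕜 E] [T2Space E]
    {w : ι → 𝕜} (hw : Function.Injective w) {f : ι → E}
    (h : ∀ z, (∀ k, z ≠ w k) → ∑ k, (z - w k)⁻¹ • f k = 0) : f = 0 := by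
  funext k
  -- off the poles, `g z = (z - w k) • ∑ l, (z - w l)⁻¹ • f l`, and `g` is continuous at `w k`
  let g : 𝕜 → E := fun z => f k + ∑ l ∈ univ.erase k, ((z - w k) * (z - w l)⁻¹) • f l
  have hg : ContinuousAt g (w k) := by
    refine continuousAt_const.add (tendsto_finsetSum _ fun l hl => ?_)
    have hkl : w k - w l ≠ 0 := sub_ne_zero.2 (hw.ne (ne_of_mem_erase hl).symm)
    exact (by fun_prop (disch := exact hkl) :
      ContinuousAt (fun z => ((z - w k) * (z - w l)⁻¹) • f l) (w k))
  have hg0 : ∀ᶠ z in 𝓝[≠] w k, g z = 0 := by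
    have hpoles : ∀ᶠ z in 𝓝[≠] w k, ∀ l, z ≠ w l := by
      refine eventually_all.2 fun l => ?_
      rcases eq_or_ne l k with rfl | hlk
      · exact self_mem_nhdsWithin
      · exact nhdsWithin_le_nhds (eventually_ne_nhds (hw.ne hlk).symm)
    filter_upwards [hpoles] with z hz
    have hzk : z - w k ≠ 0 := sub_ne_zero.2 (hz k)
    have := congrArg ((z - w k) • ·) (h z hz)
    rw [smul_zero, ← add_sum_erase _ _ (mem_univ k), smul_add, smul_smul, mul_inv_cancel₀ hzk,
      one_smul, smul_sum] at this
    simpa only [g, smul_smul] using this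
  have := tendsto_nhds_unique (hg.tendsto.mono_left nhdsWithin_le_nhds)
    (tendsto_const_nhds.congr' (hg0.mono fun _ h => h.symm))
  simpa [g] using this

theorem eq_of_forall_sum_inv_sub_smul_eq [NontriviallyNormedField 𝕜] [AddCommGroup E]
    [Module 𝕜 E] [TopologicalSpace E] [IsTopologicalAddGroup E] [ContinuousSMul 𝕜 E] [T2Space E]
    {w : ι → 𝕜} (hw : Function.Injective w) {f g : ι → E}
    (h : ∀ z, (∀ k, z ≠ w k) → ∑ k, (z - w k)⁻¹ • f k = ∑ k, (z - w k)⁻¹ • g k) : f = g :=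
  sub_eq_zero.1 <| eq_zero_of_forall_sum_inv_sub_smul_eq_zero hw fun z hz => by
    simp only [Pi.sub_apply, smul_sub, sum_sub_distrib, h z hz, sub_self]

end PartialFractions

theorem Fin.sum_univ_erase_succ {M : Type*} [AddCommGroup M] {n : ℕ} (f : Fin (n + 1) → M)
    (i : Fin n) : ∑ k ∈ univ.erase i.succ, f k = f 0 + ∑ j ∈ univ.erase i, f j.succ := by
  rw [sum_erase_eq_sub (mem_univ _), sum_erase_eq_sub (mem_univ _), Fin.sum_univ_succ,
    add_sub_assoc]

section MatrixCalculus

-- any norm on matrices gives the same differentiability; with the sup norm it is entrywise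
open scoped Matrix.Norms.Elementwise

variable {n p : ℕ}

theorem differentiableAt_matrix_iff {E : Type*} [NormedAddCommGroup E] [NormedSpace ℂ E]
    {f : E → Matrix (Fin p) (Fin p) ℂ} {a : E} :
    DifferentiableAt ℂ f a ↔ ∀ r c, DifferentiableAt ℂ (fun x => f x r c) a :=
  differentiableAt_pi.trans (forall_congr' fun _ => differentiableAt_pi)

variable {F G : (Fin n → ℂ) → Matrix (Fin p) (Fin p) ℂ} {a : Fin n → ℂ}

theorem pd_add (i : Fin n) (hF : DifferentiableAt ℂ F a) (hG : DifferentiableAt ℂ G a) :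
    pd i (fun x => F x + G x) a = pd i F a + pd i G a := by
  ext r c
  simp only [pd, Matrix.of_apply, Matrix.add_apply]
  rw [fderiv_fun_add (differentiableAt_matrix_iff.1 hF r c) (differentiableAt_matrix_iff.1 hG r c)]
  rfl

theorem pd_neg (i : Fin n) : pd i (fun x => -F x) a = -pd i F a := by
  ext r c
  simp only [pd, Matrix.of_apply, Matrix.neg_apply, fderiv_fun_neg]
  rfl

theorem pd_const_smul (i : Fin n) (c : ℂ) (hF : DifferentiableAt ℂ F a) :
    pd i (fun x => c • F x) a = c • pd i F a := by
  ext r c'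
  simp only [pd, Matrix.of_apply, Matrix.smul_apply, smul_eq_mul]
  rw [fderiv_const_mul (differentiableAt_matrix_iff.1 hF r c')]
  rfl

theorem pd_sum {ι : Type*} (i : Fin n) (s : Finset ι)
    {F : ι → (Fin n → ℂ) → Matrix (Fin p) (Fin p) ℂ} (hF : ∀ j ∈ s, DifferentiableAt ℂ (F j) a) :
    pd i (fun x => ∑ j ∈ s, F j x) a = ∑ j ∈ s, pd i (F j) a := by
  ext r c
  simp only [pd, Matrix.of_apply, Matrix.sum_apply]
  rw [fderiv_fun_sum fun j hj => differentiableAt_matrix_iff.1 (hF j hj) r c]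
  simp

theorem hasFDerivAt_inv_sub_apply (j : Fin n) {z : ℂ} (hz : z ≠ a j) :
    HasFDerivAt (fun x : Fin n → ℂ => (z - x j)⁻¹)
      (((z - a j) ^ 2)⁻¹ • (ContinuousLinearMap.proj j : (Fin n → ℂ) →L[ℂ] ℂ)) a := by
  have h : HasFDerivAt (fun x : Fin n → ℂ => (z - x j)⁻¹)
      (-((z - a j) ^ 2)⁻¹ • -(ContinuousLinearMap.proj j : (Fin n → ℂ) →L[ℂ] ℂ)) a :=
    (hasDerivAt_inv (sub_ne_zero.2 hz)).comp_hasFDerivAt a ((hasFDerivAt_apply j a).const_sub z)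
  simpa only [neg_smul, smul_neg, neg_neg] using h

theorem pd_inv_sub_smul (i j : Fin n) {z : ℂ} (hz : z ≠ a j) (hF : DifferentiableAt ℂ F a) :
    pd i (fun x => (z - x j)⁻¹ • F x) a
      = (z - a j)⁻¹ • pd i F a + (if j = i then ((z - a j) ^ 2)⁻¹ else 0) • F a := by
  have hinv := hasFDerivAt_inv_sub_apply j hz
  ext r c
  simp only [pd, Matrix.of_apply, Matrix.add_apply, Matrix.smul_apply, smul_eq_mul]
  rw [fderiv_fun_mul hinv.differentiableAt (differentiableAt_matrix_iff.1 hF r c), hinv.fderiv]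
  simp [Pi.single_apply, mul_comm]

end MatrixCalculus

section Commutator

variable {p : ℕ}

theorem matComm_self (X : Matrix (Fin p) (Fin p) ℂ) : matComm X X = 0 :=
  sub_self _

theorem matComm_sum_smul_left {ι : Type*} (s : Finset ι) (c : ι → ℂ)
    (R : ι → Matrix (Fin p) (Fin p) ℂ) (Y : Matrix (Fin p) (Fin p) ℂ) :
    matComm (∑ k ∈ s, c k • R k) Y = ∑ k ∈ s, c k • matComm (R k) Y := by
  simp only [matComm, sum_mul, mul_sum, smul_mul_assoc, mul_smul_comm, smul_sub, sum_sub_distrib]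

theorem inv_sub_smul_matComm_comm (u v : ℂ) (X Y : Matrix (Fin p) (Fin p) ℂ) :
    (u - v)⁻¹ • matComm X Y = (v - u)⁻¹ • matComm Y X := by
  rw [matComm, matComm, ← neg_sub (Y * X), smul_neg, ← neg_smul, ← inv_neg, neg_sub]

/-- The residue at `w k` of `(z - w m)⁻¹ • matComm (∑ l, (z - w l)⁻¹ • R l) (R m)`; the Schlesinger
system says that it is the derivative of `R k` in the direction of the pole `w m`. -/
noncomputable def schlesingerRhs {ι : Type*} [Fintype ι] [DecidableEq ι] (w : ι → ℂ)
    (R : ι → Matrix (Fin p) (Fin p) ℂ) (m k : ι) : Matrix (Fin p) (Fin p) ℂ :=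
  if k = m then -∑ l ∈ univ.erase m, (w l - w m)⁻¹ • matComm (R l) (R m)
  else (w k - w m)⁻¹ • matComm (R k) (R m)

theorem inv_sub_smul_matComm_sum {ι : Type*} [Fintype ι] [DecidableEq ι] {w : ι → ℂ}
    (hw : Function.Injective w) {z : ℂ} (hz : ∀ k, z ≠ w k)
    (R : ι → Matrix (Fin p) (Fin p) ℂ) (m : ι) :
    (z - w m)⁻¹ • matComm (∑ k, (z - w k)⁻¹ • R k) (R m)
      = ∑ k, (z - w k)⁻¹ • schlesingerRhs w R m k := by
  rw [matComm_sum_smul_left]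
  exact inv_sub_smul_sum_inv_sub_smul hw hz m (matComm_self _)

end Commutator

section Connection

open scoped Matrix.Norms.Elementwise

variable {n p : ℕ}

/-- Index `0` is the fixed pole `a_0 = 0`. -/
def poles (a : Fin n → ℂ) : Fin (n + 1) → ℂ :=
  Fin.cons 0 a

def residues (B0 : (Fin n → ℂ) → Matrix (Fin p) (Fin p) ℂ)
    (B : Fin n → (Fin n → ℂ) → Matrix (Fin p) (Fin p) ℂ) (a : Fin n → ℂ) :
    Fin (n + 1) → Matrix (Fin p) (Fin p) ℂ :=
  Fin.cons (B0 a) fun j => B j a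

@[simp] theorem poles_zero (a : Fin n → ℂ) : poles a 0 = 0 := rfl

@[simp] theorem poles_succ (a : Fin n → ℂ) (j : Fin n) : poles a j.succ = a j := rfl

@[simp] theorem residues_zero (B0 : (Fin n → ℂ) → Matrix (Fin p) (Fin p) ℂ)
    (B : Fin n → (Fin n → ℂ) → Matrix (Fin p) (Fin p) ℂ) (a : Fin n → ℂ) :
    residues B0 B a 0 = B0 a := rfl

@[simp] theorem residues_succ (B0 : (Fin n → ℂ) → Matrix (Fin p) (Fin p) ℂ)
    (B : Fin n → (Fin n → ℂ) → Matrix (Fin p) (Fin p) ℂ) (a : Fin n → ℂ) (j : Fin n) :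
    residues B0 B a j.succ = B j a := rfl

theorem forall_ne_poles_iff {a : Fin n → ℂ} {z : ℂ} :
    (∀ k, z ≠ poles a k) ↔ z ≠ 0 ∧ ∀ j, z ≠ a j :=
  Fin.forall_fin_succ

/-- `ω = connDz B0 B a z dz + ∑ i, connDa B i a z da_i` is the connection form. -/
noncomputable def connDz (B0 : (Fin n → ℂ) → Matrix (Fin p) (Fin p) ℂ)
    (B : Fin n → (Fin n → ℂ) → Matrix (Fin p) (Fin p) ℂ) (a : Fin n → ℂ) (z : ℂ) :
    Matrix (Fin p) (Fin p) ℂ :=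
  (z - 0)⁻¹ • B0 a + ∑ j, (z - a j)⁻¹ • B j a

noncomputable def connDa (B : Fin n → (Fin n → ℂ) → Matrix (Fin p) (Fin p) ℂ) (i : Fin n)
    (a : Fin n → ℂ) (z : ℂ) : Matrix (Fin p) (Fin p) ℂ :=
  -((z - a i)⁻¹ • B i a)

variable {B0 : (Fin n → ℂ) → Matrix (Fin p) (Fin p) ℂ}
  {B : Fin n → (Fin n → ℂ) → Matrix (Fin p) (Fin p) ℂ} {a : Fin n → ℂ} {z : ℂ}

theorem connDz_eq_sum_poles :
    connDz B0 B a z = ∑ k, (z - poles a k)⁻¹ • residues B0 B a k := by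
  simp [connDz, poles, residues, Fin.sum_univ_succ]

theorem zd_connDa (m : Fin n) (hz : z ≠ a m) :
    zd (connDa B m a) z = ((z - a m) ^ 2)⁻¹ • B m a := by
  have hzm : z - a m ≠ 0 := sub_ne_zero.2 hz
  ext r c
  simp only [zd, connDa, Matrix.of_apply, Matrix.neg_apply, Matrix.smul_apply, smul_eq_mul]
  rw [deriv.fun_neg, deriv_mul_const (by fun_prop (disch := exact hzm)),
    deriv_comp_sub_const (f := fun y => y⁻¹), deriv_inv, neg_mul, neg_neg]

theorem pd_connDz (hB0 : DifferentiableAt ℂ B0 a) (hB : ∀ j, DifferentiableAt ℂ (B j) a)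
    (m : Fin n) (hz : ∀ j, z ≠ a j) :
    pd m (fun x => connDz B0 B x z) a
      = ∑ k, (z - poles a k)⁻¹ • pd m (fun x => residues B0 B x k) a
        + ((z - a m) ^ 2)⁻¹ • B m a := by
  have hzj : ∀ j, z - a j ≠ 0 := fun j => sub_ne_zero.2 (hz j)
  unfold connDz
  rw [pd_add m (by fun_prop) (by fun_prop (disch := exact hzj _)), pd_const_smul m _ hB0,
    pd_sum m _ fun j _ => by fun_prop (disch := exact hzj _),
    sum_congr rfl fun j _ => pd_inv_sub_smul m j (hz j) (hB j), sum_add_distrib]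
  simp [Fin.sum_univ_succ, poles, residues, ite_smul, add_assoc]

theorem pd_connDa_of_ne (hB : ∀ j, DifferentiableAt ℂ (B j) a) {i j : Fin n} (hij : i ≠ j)
    (hz : z ≠ a j) :
    pd i (fun x => connDa B j x z) a = -((z - a j)⁻¹ • pd i (B j) a) := by
  simp only [connDa]
  rw [pd_neg, pd_inv_sub_smul i j hz (hB j), if_neg hij.symm, zero_smul, add_zero]

theorem zeroCurvature_dz_iff (hB0 : DifferentiableAt ℂ B0 a)
    (hB : ∀ j, DifferentiableAt ℂ (B j) a) (hw : Function.Injective (poles a))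
    (hz : ∀ k, z ≠ poles a k) (m : Fin n) :
    zd (connDa B m a) z - pd m (fun x => connDz B0 B x z) a
        = connDz B0 B a z * connDa B m a z - connDa B m a z * connDz B0 B a z ↔
      ∑ k, (z - poles a k)⁻¹ • pd m (fun x => residues B0 B x k) a
        = ∑ k, (z - poles a k)⁻¹ • schlesingerRhs (poles a) (residues B0 B a) m.succ k := by
  have hza : ∀ j, z ≠ a j := (forall_ne_poles_iff.1 hz).2
  have hbracket : connDz B0 B a z * connDa B m a z - connDa B m a z * connDz B0 B a z
      = -((z - poles a m.succ)⁻¹ • matComm (∑ k, (z - poles a k)⁻¹ • residues B0 B a k)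
          (residues B0 B a m.succ)) := by
    rw [← connDz_eq_sum_poles, poles_succ, residues_succ, connDa, matComm, mul_neg, neg_mul,
      mul_smul_comm, smul_mul_assoc, smul_sub]
    abel
  rw [zd_connDa m (hza m), pd_connDz hB0 hB m hza, hbracket, inv_sub_smul_matComm_sum hw hz,
    sub_add_cancel_right, neg_inj]

theorem zeroCurvature_da_of_schlesinger (hB : ∀ j, DifferentiableAt ℂ (B j) a) {i j : Fin n}
    (hij : i ≠ j) (hz : ∀ k, z ≠ a k)
    (hBj : pd i (B j) a = (a j - a i)⁻¹ • matComm (B j a) (B i a))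
    (hBi : pd j (B i) a = (a i - a j)⁻¹ • matComm (B i a) (B j a)) (ha : a i ≠ a j) :
    pd i (fun x => connDa B j x z) a - pd j (fun x => connDa B i x z) a
      = connDa B i a z * connDa B j a z - connDa B j a z * connDa B i a z := by
  have hbracket : connDa B i a z * connDa B j a z - connDa B j a z * connDa B i a z
      = ((z - a i)⁻¹ * (z - a j)⁻¹) • matComm (B i a) (B j a) := by
    simp only [connDa, matComm, neg_mul_neg, smul_mul_smul_comm, smul_sub, mul_comm ((z - a j)⁻¹)]
  rw [pd_connDa_of_ne hB hij (hz j), pd_connDa_of_ne hB hij.symm (hz i), hBj, hBi,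
    inv_sub_smul_matComm_comm (a j), hbracket, inv_sub_mul_inv_sub ha (hz i) (hz j)]
  module

end Connection

theorem schlesinger_system_iff {n p : ℕ} {B0 : (Fin n → ℂ) → Matrix (Fin p) (Fin p) ℂ}
    {B : Fin n → (Fin n → ℂ) → Matrix (Fin p) (Fin p) ℂ} {a : Fin n → ℂ} :
    ((∀ m : Fin n, pd m B0 a = (0 - a m)⁻¹ • matComm (B0 a) (B m a))
      ∧ (∀ i m : Fin n, i ≠ m → pd m (B i) a = (a i - a m)⁻¹ • matComm (B i a) (B m a))
      ∧ (∀ i : Fin n, pd i (B i) a = -((a i - 0)⁻¹ • matComm (B i a) (B0 a)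
            + ∑ j ∈ univ.erase i, (a i - a j)⁻¹ • matComm (B i a) (B j a)))) ↔
      ∀ m : Fin n, (fun k => pd m (fun x => residues B0 B x k) a)
        = schlesingerRhs (poles a) (residues B0 B a) m.succ := by
  have hzero : ∀ m : Fin n, schlesingerRhs (poles a) (residues B0 B a) m.succ 0
      = (0 - a m)⁻¹ • matComm (B0 a) (B m a) := fun m => by
    simp [schlesingerRhs, (Fin.succ_ne_zero m).symm]
  have hoff : ∀ i m : Fin n, i ≠ m → schlesingerRhs (poles a) (residues B0 B a) m.succ i.succ
      = (a i - a m)⁻¹ • matComm (B i a) (B m a) := fun i m him => by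
    simp [schlesingerRhs, him]
  have hdiag : ∀ i : Fin n, schlesingerRhs (poles a) (residues B0 B a) i.succ i.succ
      = -((a i - 0)⁻¹ • matComm (B i a) (B0 a)
          + ∑ j ∈ univ.erase i, (a i - a j)⁻¹ • matComm (B i a) (B j a)) := fun i => by
    rw [schlesingerRhs, if_pos rfl]
    simp only [Fin.sum_univ_erase_succ, poles_zero, poles_succ,
      residues_zero, residues_succ, inv_sub_smul_matComm_comm (a i)]
  simp only [funext_iff, Fin.forall_fin_succ, residues_zero, residues_succ, hzero]
  constructor
  · rintro ⟨h0, hoff', hdiag'⟩ m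
    refine ⟨h0 m, fun i => ?_⟩
    rcases eq_or_ne i m with rfl | him
    · rw [hdiag, hdiag']
    · rw [hoff i m him, hoff' i m him]
  · intro h
    exact ⟨fun m => (h m).1, fun i m him => ((h m).2 i).trans (hoff i m him),
      fun i => ((h i).2 i).trans (hdiag i)⟩

theorem isomonodromic_deformation_typical_case_general
    {p n : ℕ}
    (W : Set (Fin n → ℂ)) (hWopen : IsOpen W)
    (hWdist : ∀ a ∈ W, Function.Injective a)
    (hWne : ∀ a ∈ W, ∀ i, a i ≠ 0)
    (B : Fin n → (Fin n → ℂ) → Matrix (Fin p) (Fin p) ℂ)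
    (hB : ∀ i r c, DifferentiableOn ℂ (fun x => B i x r c) W)
    (B0 : (Fin n → ℂ) → Matrix (Fin p) (Fin p) ℂ)
    (hB0 : B0 = fun a => -∑ j : Fin n, B j a)
    (A : (Fin n → ℂ) → ℂ → Matrix (Fin p) (Fin p) ℂ)
    (hA : A = fun a z =>
      (z - 0)⁻¹ • B0 a + ∑ j : Fin n, (z - a j)⁻¹ • B j a)
    (Ai : Fin n → (Fin n → ℂ) → ℂ → Matrix (Fin p) (Fin p) ℂ)
    (hAi : Ai = fun i a z => -((z - a i)⁻¹ • B i a)) :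
    (∀ a ∈ W, ∀ z : ℂ, z ≠ 0 → (∀ j, z ≠ a j) →
        (∀ i : Fin n,
          zd (Ai i a) z - pd i (fun x => A x z) a
            = A a z * Ai i a z - Ai i a z * A a z)
        ∧ (∀ i j : Fin n, i ≠ j →
          pd i (fun x => Ai j x z) a - pd j (fun x => Ai i x z) a
            = Ai i a z * Ai j a z - Ai j a z * Ai i a z))
      ↔ (∀ a ∈ W,
        -- the equation for `i = 0` (pole `a_0 = 0`) and any `m ∈ {1, …, n}`
        (∀ m : Fin n, pd m B0 a = (0 - a m)⁻¹ • matComm (B0 a) (B m a))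
        -- the off-diagonal equations for `i, m ∈ {1, …, n}`, `i ≠ m`
        ∧ (∀ i m : Fin n, i ≠ m →
          pd m (B i) a = (a i - a m)⁻¹ • matComm (B i a) (B m a))
        -- the diagonal equations for `i ∈ {1, …, n}`
        ∧ (∀ i : Fin n, pd i (B i) a
            = -((a i - 0)⁻¹ • matComm (B i a) (B0 a)
              + ∑ j ∈ Finset.univ.erase i, (a i - a j)⁻¹ • matComm (B i a) (B j a)))) := by
  obtain rfl : A = connDz B0 B := hA
  obtain rfl : Ai = connDa B := hAi
  open scoped Matrix.Norms.Elementwise in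
  have hdiff : ∀ a ∈ W, DifferentiableAt ℂ B0 a ∧ ∀ j, DifferentiableAt ℂ (B j) a := by
    intro a ha
    have hBa : ∀ j, DifferentiableAt ℂ (B j) a := fun j => differentiableAt_matrix_iff.2
      fun r c => (hB j r c).differentiableAt (hWopen.mem_nhds ha)
    exact ⟨hB0 ▸ by fun_prop, hBa⟩
  have hpoles : ∀ a ∈ W, Function.Injective (poles a) := fun a ha =>
    Fin.cons_injective_iff.2 ⟨fun ⟨j, hj⟩ => hWne a ha j hj, hWdist a ha⟩
  constructor
  · intro hF a ha
    obtain ⟨hB0a, hBa⟩ := hdiff a ha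
    refine schlesinger_system_iff.2 fun m =>
      eq_of_forall_sum_inv_sub_smul_eq (hpoles a ha) fun z hz => ?_
    obtain ⟨hz0, hza⟩ := forall_ne_poles_iff.1 hz
    exact (zeroCurvature_dz_iff hB0a hBa (hpoles a ha) hz m).1 ((hF a ha z hz0 hza).1 m)
  · intro hS a ha z hz0 hza
    obtain ⟨hB0a, hBa⟩ := hdiff a ha
    have hz := forall_ne_poles_iff.2 ⟨hz0, hza⟩
    refine ⟨fun m => (zeroCurvature_dz_iff hB0a hBa (hpoles a ha) hz m).2 ?_, fun i j hij => ?_⟩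
    · simp only [congr_fun (schlesinger_system_iff.1 (hS a ha) m)]
    · have hoff := (hS a ha).2.1
      exact zeroCurvature_da_of_schlesinger hBa hij hza (hoff j i hij.symm) (hoff i j hij)
        ((hWdist a ha).ne hij)

/-- The typical case of Proposition 7: with `B_0 = C_1 = -Σ_{j=1}^n B_j`,
`a_0 = 0`, and `A(a,z) = Σ_{j=0}^n B_j(a)(z - a_j)^{-1}`,
`A_i(a,z) = -B_i(a)(z - a_i)^{-1}`, the zero-curvature conditions
`dω¹ = ω¹ ∧ ω¹` are equivalent to the ordinary Schlesinger system (9). -/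
theorem isomonodromic_deformation_typical_case
    {p n : ℕ} (hp : 1 ≤ p) (hn : 1 ≤ n)
    (W : Set (Fin n → ℂ)) (hWopen : IsOpen W)
    (hWdist : ∀ a ∈ W, Function.Injective a)
    (hWne : ∀ a ∈ W, ∀ i, a i ≠ 0)
    (B : Fin n → (Fin n → ℂ) → Matrix (Fin p) (Fin p) ℂ)
    (hB : ∀ i r c, DifferentiableOn ℂ (fun x => B i x r c) W)
    (B0 : (Fin n → ℂ) → Matrix (Fin p) (Fin p) ℂ)
    (hB0 : B0 = fun a => -∑ j : Fin n, B j a)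
    (A : (Fin n → ℂ) → ℂ → Matrix (Fin p) (Fin p) ℂ)
    (hA : A = fun a z =>
      (z - 0)⁻¹ • B0 a + ∑ j : Fin n, (z - a j)⁻¹ • B j a)
    (Ai : Fin n → (Fin n → ℂ) → ℂ → Matrix (Fin p) (Fin p) ℂ)
    (hAi : Ai = fun i a z => -((z - a i)⁻¹ • B i a)) :
    (∀ a ∈ W, ∀ z : ℂ, z ≠ 0 → (∀ j, z ≠ a j) →
        (∀ i : Fin n,
          zd (Ai i a) z - pd i (fun x => A x z) a
            = A a z * Ai i a z - Ai i a z * A a z)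
        ∧ (∀ i j : Fin n, i ≠ j →
          pd i (fun x => Ai j x z) a - pd j (fun x => Ai i x z) a
            = Ai i a z * Ai j a z - Ai j a z * Ai i a z))
      ↔ (∀ a ∈ W,
        -- the equation for `i = 0` (pole `a_0 = 0`) and any `m ∈ {1, …, n}`
        (∀ m : Fin n, pd m B0 a = (0 - a m)⁻¹ • matComm (B0 a) (B m a))
        -- the off-diagonal equations for `i, m ∈ {1, …, n}`, `i ≠ m`
        ∧ (∀ i m : Fin n, i ≠ m →
          pd m (B i) a = (a i - a m)⁻¹ • matComm (B i a) (B m a))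
        -- the diagonal equations for `i ∈ {1, …, n}`
        ∧ (∀ i : Fin n, pd i (B i) a
            = -((a i - 0)⁻¹ • matComm (B i a) (B0 a)
              + ∑ j ∈ Finset.univ.erase i, (a i - a j)⁻¹ • matComm (B i a) (B j a)))) :=
  isomonodromic_deformation_typical_case_general W hWopen hWdist hWne B hB B0 hB0 A hA Ai hAi
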